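/- arXiv:1910.04385 — 2 statements merged into one kernel-verified Lean document; each statement's English description precedes it below -/
import Mathlib

section
/- Let X be a measurable space, g : X → ℝ a measurable function, ℓ : ℝ → ℝ a measurable margin loss, and θ, θ' ∈ [0,1]. Assume the function (x,x') ↦ ℓ(g(x) − g(x')) is integrable with respect to all four product measures P×P, P×N, N×P and N×N. Then the corrupted AUC risk decomposes as R_corr^ℓ(g) = (θ − θ')·R_AUC^ℓ(g) + (1−θ)θ'·E_{x~P}E_{x'~N}[φ(x,x')] + (θθ'/2)·E_{x~P}E_{x'~P}[φ(x,x')] + ((1−θ)(1−θ')/2)·E_{x~N}E_{x'~N}[φ(x,x')], where φ(x,x') = ℓ(g(x) − g(x')) + ℓ(g(x') − g(x)). -/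
/-!
Both corrupted distributions are mixtures of `P` and `N`, so the corrupted risk is bilinear in
them and expands into the four iterated risks `E_{P|N} E_{P|N} ℓ` with weights `θθ'`, `θ(1-θ')`,
`(1-θ)θ'`, `(1-θ)(1-θ')`. By Fubini each `φ`-term is the sum of two of these crossed risks, after
which both sides are the same linear combination of the four.
-/

open MeasureTheory Function

/-- The corrupted (mixture) distribution `θ·P + (1−θ)·N`. -/
noncomputable def mix {X : Type*} [MeasurableSpace X] (P N : Measure X) (θ : ℝ) : Measure X :=
  ENNReal.ofReal θ • P + ENNReal.ofReal (1 - θ) • N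

section Mixture

variable {X E : Type*} [MeasurableSpace X] [NormedAddCommGroup E] [NormedSpace ℝ E]
  {P N : Measure X} {θ : ℝ}

theorem integral_mix {f : X → E} (hP : Integrable f P) (hN : Integrable f N)
    (hθ : θ ∈ Set.Icc (0 : ℝ) 1) :
    ∫ x, f x ∂mix P N θ = θ • ∫ x, f x ∂P + (1 - θ) • ∫ x, f x ∂N := by
  rw [mix, integral_add_measure (hP.smul_measure ENNReal.ofReal_ne_top)
      (hN.smul_measure ENNReal.ofReal_ne_top), integral_smul_measure, integral_smul_measure,
    ENNReal.toReal_ofReal hθ.1, ENNReal.toReal_ofReal (sub_nonneg.2 hθ.2)]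

variable {μ : Measure X} [SFinite μ] [SFinite P] [SFinite N] {f : X → X → E}

theorem ae_integral_mix_right (hP : Integrable (uncurry f) (μ.prod P))
    (hN : Integrable (uncurry f) (μ.prod N)) (hθ : θ ∈ Set.Icc (0 : ℝ) 1) :
    ∀ᵐ x ∂μ, ∫ y, f x y ∂mix P N θ = θ • ∫ y, f x y ∂P + (1 - θ) • ∫ y, f x y ∂N := by
  filter_upwards [hP.prod_right_ae, hN.prod_right_ae] with x hxP hxN
  exact integral_mix hxP hxN hθ

theorem integrable_integral_mix_right (hP : Integrable (uncurry f) (μ.prod P))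
    (hN : Integrable (uncurry f) (μ.prod N)) (hθ : θ ∈ Set.Icc (0 : ℝ) 1) :
    Integrable (fun x => ∫ y, f x y ∂mix P N θ) μ :=
  ((hP.integral_prod_left.smul θ).add (hN.integral_prod_left.smul (1 - θ))).congr
    ((ae_integral_mix_right hP hN hθ).mono fun _ hx => hx.symm)

theorem integral_integral_mix_right (hP : Integrable (uncurry f) (μ.prod P))
    (hN : Integrable (uncurry f) (μ.prod N)) (hθ : θ ∈ Set.Icc (0 : ℝ) 1) :
    ∫ x, ∫ y, f x y ∂mix P N θ ∂μ =
      θ • ∫ x, ∫ y, f x y ∂P ∂μ + (1 - θ) • ∫ x, ∫ y, f x y ∂N ∂μ := by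
  have hPθ : Integrable (fun x => θ • ∫ y, f x y ∂P) μ := hP.integral_prod_left.smul θ
  have hNθ : Integrable (fun x => (1 - θ) • ∫ y, f x y ∂N) μ := hN.integral_prod_left.smul _
  rw [integral_congr_ae (ae_integral_mix_right hP hN hθ), integral_add hPθ hNθ,
    integral_smul, integral_smul]

end Mixture

theorem integral_integral_add_swap {X E : Type*} [MeasurableSpace X] [NormedAddCommGroup E]
    [NormedSpace ℝ E] {μ ν : Measure X} [SFinite μ] [SFinite ν] {f : X → X → E}
    (hμν : Integrable (uncurry f) (μ.prod ν)) (hνμ : Integrable (uncurry f) (ν.prod μ)) :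
    ∫ x, ∫ y, (f x y + f y x) ∂ν ∂μ = ∫ x, ∫ y, f x y ∂ν ∂μ + ∫ x, ∫ y, f x y ∂μ ∂ν := by
  have hswap : Integrable (uncurry fun x y => f y x) (μ.prod ν) := hνμ.swap
  calc ∫ x, ∫ y, (f x y + f y x) ∂ν ∂μ
      = ∫ z, (f z.1 z.2 + f z.2 z.1) ∂μ.prod ν := integral_integral (hμν.add hswap)
    _ = ∫ z, f z.1 z.2 ∂μ.prod ν + ∫ z, f z.2 z.1 ∂μ.prod ν := integral_add hμν hswap
    _ = ∫ x, ∫ y, f x y ∂ν ∂μ + ∫ x, ∫ y, f x y ∂μ ∂ν := by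
      rw [← integral_integral hμν, ← integral_integral hswap, integral_integral_swap hswap]

theorem corrupted_auc_risk_decomposition_general
    {X : Type*} [MeasurableSpace X] (P N : Measure X)
    [IsProbabilityMeasure P] [IsProbabilityMeasure N]
    (g : X → ℝ) (ℓ : ℝ → ℝ)
    (θ θ' : ℝ) (hθ : θ ∈ Set.Icc (0 : ℝ) 1) (hθ' : θ' ∈ Set.Icc (0 : ℝ) 1)
    (hPP : Integrable (fun p : X × X => ℓ (g p.1 - g p.2)) (P.prod P))
    (hPN : Integrable (fun p : X × X => ℓ (g p.1 - g p.2)) (P.prod N))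
    (hNP : Integrable (fun p : X × X => ℓ (g p.1 - g p.2)) (N.prod P))
    (hNN : Integrable (fun p : X × X => ℓ (g p.1 - g p.2)) (N.prod N)) :
    (∫ x, ∫ x', ℓ (g x - g x') ∂(mix P N θ') ∂(mix P N θ)) =
      (θ - θ') * (∫ x, ∫ x', ℓ (g x - g x') ∂N ∂P)
      + (1 - θ) * θ' * (∫ x, ∫ x', (ℓ (g x - g x') + ℓ (g x' - g x)) ∂N ∂P)
      + θ * θ' / 2 * (∫ x, ∫ x', (ℓ (g x - g x') + ℓ (g x' - g x)) ∂P ∂P)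
      + (1 - θ) * (1 - θ') / 2 *
          (∫ x, ∫ x', (ℓ (g x - g x') + ℓ (g x' - g x)) ∂N ∂N) := by
  set f : X → X → ℝ := fun x x' => ℓ (g x - g x')
  rw [integral_mix (integrable_integral_mix_right hPP hPN hθ')
      (integrable_integral_mix_right hNP hNN hθ') hθ,
    integral_integral_mix_right hPP hPN hθ', integral_integral_mix_right hNP hNN hθ',
    integral_integral_add_swap (f := f) hPN hNP, integral_integral_add_swap (f := f) hPP hPP,
    integral_integral_add_swap (f := f) hNN hNN]
  simp only [smul_eq_mul]
  ring

/-- Theorem 1 (decomposition of the corrupted AUC risk): for a measurable margin loss `ℓ`,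
measurable scoring function `g`, and `θ, θ' ∈ [0,1]`, the corrupted AUC risk decomposes as
`(θ − θ')·R_AUC^ℓ(g)` plus the three excessive terms involving
`φ(x,x') = ℓ(g x − g x') + ℓ(g x' − g x)`. -/
theorem corrupted_auc_risk_decomposition
    {X : Type*} [MeasurableSpace X] (P N : Measure X)
    [IsProbabilityMeasure P] [IsProbabilityMeasure N]
    (g : X → ℝ) (hg : Measurable g) (ℓ : ℝ → ℝ) (hℓ : Measurable ℓ)
    (θ θ' : ℝ) (hθ : θ ∈ Set.Icc (0 : ℝ) 1) (hθ' : θ' ∈ Set.Icc (0 : ℝ) 1)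
    (hPP : Integrable (fun p : X × X => ℓ (g p.1 - g p.2)) (P.prod P))
    (hPN : Integrable (fun p : X × X => ℓ (g p.1 - g p.2)) (P.prod N))
    (hNP : Integrable (fun p : X × X => ℓ (g p.1 - g p.2)) (N.prod P))
    (hNN : Integrable (fun p : X × X => ℓ (g p.1 - g p.2)) (N.prod N)) :
    (∫ x, ∫ x', ℓ (g x - g x') ∂(mix P N θ') ∂(mix P N θ)) =
      (θ - θ') * (∫ x, ∫ x', ℓ (g x - g x') ∂N ∂P)
      + (1 - θ) * θ' * (∫ x, ∫ x', (ℓ (g x - g x') + ℓ (g x' - g x)) ∂N ∂P)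
      + θ * θ' / 2 * (∫ x, ∫ x', (ℓ (g x - g x') + ℓ (g x' - g x)) ∂P ∂P)
      + (1 - θ) * (1 - θ') / 2 *
          (∫ x, ∫ x', (ℓ (g x - g x') + ℓ (g x' - g x)) ∂N ∂N) :=
  corrupted_auc_risk_decomposition_general P N g ℓ θ θ' hθ hθ' hPP hPN hNP hNN
end

section
/- Let X be a measurable space, g : X → ℝ a measurable function, θ, θ' ∈ [0,1], and let ℓ_sym : ℝ → ℝ be a measurable symmetric loss with constant K > 0 taking values in [0,K]. Then the corrupted AUC risk is an affine transformation of the clean AUC risk: R_corr^{ℓ_sym}(g) = (θ − θ')·R_AUC^{ℓ_sym}(g) + K·(1 − θ + θ')/2. -/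
/-!
Integrating against a mixture is affine in the mixing weight, so the corrupted risk expands
bilinearly into the four pairwise risks between `P` and `N`. Since `ℓ z + ℓ (-z) = K`, swapping the
two variables by Fubini shows that the `N`-versus-`P` risk is `K` minus the `P`-versus-`N` one and
that both diagonal risks equal `K / 2`; collecting terms gives the affine relation.
-/

open MeasureTheory

section Mix

variable {X : Type*} [MeasurableSpace X]

instance isFiniteMeasure_mix (μ ν : Measure X) [IsFiniteMeasure μ] [IsFiniteMeasure ν] (θ : ℝ) :
    IsFiniteMeasure (mix μ ν θ) :=
  ⟨by simp [mix, ENNReal.mul_lt_top, measure_lt_top]⟩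

theorem integral_mix_s1 {μ ν : Measure X} {F : X → ℝ} (hμ : Integrable F μ) (hν : Integrable F ν)
    {θ : ℝ} (h0 : 0 ≤ θ) (h1 : θ ≤ 1) :
    ∫ x, F x ∂(mix μ ν θ) = θ * ∫ x, F x ∂μ + (1 - θ) * ∫ x, F x ∂ν := by
  rw [mix, integral_add_measure (hμ.smul_measure ENNReal.ofReal_ne_top)
      (hν.smul_measure ENNReal.ofReal_ne_top), integral_smul_measure, integral_smul_measure,
    ENNReal.toReal_ofReal h0, ENNReal.toReal_ofReal (sub_nonneg.mpr h1), smul_eq_mul, smul_eq_mul]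

end Mix

section BoundedKernel

variable {X : Type*} [MeasurableSpace X] {f : X → X → ℝ} {C : ℝ}
  (hf : Measurable (Function.uncurry f)) (hC : ∀ x y, ‖f x y‖ ≤ C)
include hf hC

theorem integrable_uncurry_of_bound (μ ν : Measure X) [IsFiniteMeasure μ] [IsFiniteMeasure ν] :
    Integrable (Function.uncurry f) (μ.prod ν) :=
  .of_bound hf.aestronglyMeasurable C (.of_forall fun p => hC p.1 p.2)

theorem integrable_of_bound_right (ν : Measure X) [IsFiniteMeasure ν] (x : X) :
    Integrable (f x) ν :=
  .of_bound (hf.comp measurable_prodMk_left).aestronglyMeasurable C (.of_forall (hC x))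

theorem integrable_integral_of_bound (ρ ν : Measure X) [IsFiniteMeasure ρ] [IsFiniteMeasure ν] :
    Integrable (fun x => ∫ y, f x y ∂ν) ρ :=
  (integrable_uncurry_of_bound hf hC ρ ν).integral_prod_left

theorem integral_integral_mix_right_s1 (ρ μ ν : Measure X) [IsFiniteMeasure ρ] [IsFiniteMeasure μ]
    [IsFiniteMeasure ν] {θ : ℝ} (h0 : 0 ≤ θ) (h1 : θ ≤ 1) :
    ∫ x, ∫ y, f x y ∂(mix μ ν θ) ∂ρ =
      θ * ∫ x, ∫ y, f x y ∂μ ∂ρ + (1 - θ) * ∫ x, ∫ y, f x y ∂ν ∂ρ := by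
  have hinner (x : X) : ∫ y, f x y ∂(mix μ ν θ) = θ * ∫ y, f x y ∂μ + (1 - θ) * ∫ y, f x y ∂ν :=
    integral_mix_s1 (integrable_of_bound_right hf hC μ x) (integrable_of_bound_right hf hC ν x) h0 h1
  simp_rw [hinner]
  rw [integral_add ((integrable_integral_of_bound hf hC ρ μ).const_mul θ)
      ((integrable_integral_of_bound hf hC ρ ν).const_mul (1 - θ)),
    integral_const_mul, integral_const_mul]

theorem integral_integral_mix_mix (μ ν : Measure X) [IsFiniteMeasure μ] [IsFiniteMeasure ν]
    {θ θ' : ℝ} (h0 : 0 ≤ θ) (h1 : θ ≤ 1) (h0' : 0 ≤ θ') (h1' : θ' ≤ 1) :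
    ∫ x, ∫ y, f x y ∂(mix μ ν θ') ∂(mix μ ν θ) =
      θ * (θ' * ∫ x, ∫ y, f x y ∂μ ∂μ + (1 - θ') * ∫ x, ∫ y, f x y ∂ν ∂μ) +
        (1 - θ) * (θ' * ∫ x, ∫ y, f x y ∂μ ∂ν + (1 - θ') * ∫ x, ∫ y, f x y ∂ν ∂ν) := by
  rw [integral_mix_s1 (integrable_integral_of_bound hf hC μ _)
      (integrable_integral_of_bound hf hC ν _) h0 h1,
    integral_integral_mix_right_s1 hf hC μ μ ν h0' h1',
    integral_integral_mix_right_s1 hf hC ν μ ν h0' h1']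

theorem integral_integral_add_swap_of_add_swap {K : ℝ} (hK : ∀ x y, f x y + f y x = K)
    (μ ν : Measure X) [IsProbabilityMeasure μ] [IsProbabilityMeasure ν] :
    ∫ x, ∫ y, f x y ∂ν ∂μ + ∫ x, ∫ y, f x y ∂μ ∂ν = K := by
  have hf' : Measurable (Function.uncurry fun x y => f y x) := hf.comp measurable_swap
  have hC' (x y : X) : ‖f y x‖ ≤ C := hC y x
  calc ∫ x, ∫ y, f x y ∂ν ∂μ + ∫ x, ∫ y, f x y ∂μ ∂ν
      = ∫ x, ∫ y, f x y ∂ν ∂μ + ∫ x, ∫ y, f y x ∂ν ∂μ := by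
        rw [integral_integral_swap (integrable_uncurry_of_bound hf' hC' μ ν)]
    _ = ∫ x, ∫ y, (f x y + f y x) ∂ν ∂μ := by
        rw [← integral_add (integrable_integral_of_bound hf hC μ ν)
          (integrable_integral_of_bound hf' hC' μ ν)]
        refine integral_congr_ae (.of_forall fun x => ?_)
        exact (integral_add (integrable_of_bound_right hf hC ν x)
          (integrable_of_bound_right hf' hC' ν x)).symm
    _ = K := by simp [hK]

theorem integral_integral_self_of_add_swap {K : ℝ} (hK : ∀ x y, f x y + f y x = K)
    (μ : Measure X) [IsProbabilityMeasure μ] :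
    ∫ x, ∫ y, f x y ∂μ ∂μ = K / 2 := by
  linarith [integral_integral_add_swap_of_add_swap hf hC hK μ μ]

end BoundedKernel

theorem corrupted_auc_risk_symmetric_loss_general
    {X : Type*} [MeasurableSpace X] (P N : Measure X)
    [IsProbabilityMeasure P] [IsProbabilityMeasure N]
    (g : X → ℝ) (hg : Measurable g)
    (ℓ : ℝ → ℝ) (hℓ : Measurable ℓ) (K : ℝ)
    (hsym : ∀ z : ℝ, ℓ z + ℓ (-z) = K)
    (hbound : ∀ z : ℝ, ℓ z ∈ Set.Icc (0 : ℝ) K)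
    (θ θ' : ℝ) (hθ : θ ∈ Set.Icc (0 : ℝ) 1) (hθ' : θ' ∈ Set.Icc (0 : ℝ) 1) :
    (∫ x, ∫ x', ℓ (g x - g x') ∂(mix P N θ') ∂(mix P N θ)) =
      (θ - θ') * (∫ x, ∫ x', ℓ (g x - g x') ∂N ∂P) + K * (1 - θ + θ') / 2 := by
  obtain ⟨hθ0, hθ1⟩ := hθ
  obtain ⟨hθ'0, hθ'1⟩ := hθ'
  have hmeas : Measurable (Function.uncurry fun x x' => ℓ (g x - g x')) :=
    hℓ.comp ((hg.comp measurable_fst).sub (hg.comp measurable_snd))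
  have hnorm (x x' : X) : ‖ℓ (g x - g x')‖ ≤ K := by
    rw [Real.norm_of_nonneg (hbound _).1]
    exact (hbound _).2
  have hanti (x x' : X) : ℓ (g x - g x') + ℓ (g x' - g x) = K := by
    simpa only [neg_sub] using hsym (g x - g x')
  rw [integral_integral_mix_mix hmeas hnorm P N hθ0 hθ1 hθ'0 hθ'1,
    integral_integral_self_of_add_swap hmeas hnorm hanti P,
    integral_integral_self_of_add_swap hmeas hnorm hanti N]
  linear_combination (1 - θ) * θ' * integral_integral_add_swap_of_add_swap hmeas hnorm hanti P N

/-- Theorem 2: for a measurable symmetric loss `ℓ` with constant `K > 0` taking values in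
`[0,K]`, the corrupted AUC risk is an affine transformation of the clean AUC risk:
`R_corr^ℓ(g) = (θ − θ')·R_AUC^ℓ(g) + K·(1 − θ + θ')/2`. -/
theorem corrupted_auc_risk_symmetric_loss
    {X : Type*} [MeasurableSpace X] (P N : Measure X)
    [IsProbabilityMeasure P] [IsProbabilityMeasure N]
    (g : X → ℝ) (hg : Measurable g)
    (ℓ : ℝ → ℝ) (hℓ : Measurable ℓ) (K : ℝ) (hK : 0 < K)
    (hsym : ∀ z : ℝ, ℓ z + ℓ (-z) = K)
    (hbound : ∀ z : ℝ, ℓ z ∈ Set.Icc (0 : ℝ) K)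
    (θ θ' : ℝ) (hθ : θ ∈ Set.Icc (0 : ℝ) 1) (hθ' : θ' ∈ Set.Icc (0 : ℝ) 1) :
    (∫ x, ∫ x', ℓ (g x - g x') ∂(mix P N θ') ∂(mix P N θ)) =
      (θ - θ') * (∫ x, ∫ x', ℓ (g x - g x') ∂N ∂P) + K * (1 - θ + θ') / 2 :=
  corrupted_auc_risk_symmetric_loss_general P N g hg ℓ hℓ K hsym hbound θ θ' hθ hθ'
end
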